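/- arXiv:1703.06646 — 2 statements merged into one kernel-verified Lean document; each statement's English description precedes it below -/
import Mathlib

section
/- Let P = (x,0,z) with x ≠ 0 and z ≠ 0. Then the translation curve from the origin with φ = 0 (if x/(e^{-z}-1) > 0, else φ = π) and θ = arccot(∓x/(e^{-z}-1)) passes through P at parameter t = z/sin θ. -/
noncomputable def arccot (x : ℝ) : ℝ := Real.pi / 2 - Real.arctan x

lemma cot_arccot (a : ℝ) : Real.cot (arccot a) = a := by
  rw [arccot, Real.cot_eq_cos_div_sin, Real.cos_pi_div_two_sub, Real.sin_pi_div_two_sub,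
    ← Real.tan_eq_sin_div_cos, Real.tan_arctan]

lemma sin_arccot_pos (a : ℝ) : 0 < Real.sin (arccot a) := by
  rw [arccot, Real.sin_pi_div_two_sub]
  exact Real.cos_arctan_pos a

lemma exp_neg_sub_one_ne_zero {z : ℝ} (hz : z ≠ 0) : Real.exp (-z) - 1 ≠ 0 := by
  rw [sub_ne_zero, Ne, Real.exp_eq_one_iff, neg_eq_zero]
  exact hz

theorem translation_curve_params_y_zero_general (x z : ℝ) (hz : z ≠ 0) :
    let q := x / (Real.exp (-z) - 1)
    let φ := if q > 0 then 0 else Real.pi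
    let θ := arccot (if q > 0 then -q else q)
    let t := z / Real.sin θ
    (-(Real.cot θ) * Real.cos φ * (Real.exp (-(t * Real.sin θ)) - 1),
     Real.cot θ * Real.sin φ * (Real.exp (t * Real.sin θ) - 1),
     t * Real.sin θ) = (x, 0, z) := by
  intro q φ θ t
  have hz_param : t * Real.sin θ = z := div_mul_cancel₀ z (sin_arccot_pos _).ne'
  have hx_param : q * (Real.exp (-z) - 1) = x := div_mul_cancel₀ x (exp_neg_sub_one_ne_zero hz)
  rw [hz_param, cot_arccot, ← hx_param]
  -- the sign choice makes `cot θ * cos φ = -q` in both branches, while `sin φ = 0`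
  simp only [φ]
  split_ifs <;> simp

theorem translation_curve_params_y_zero (x z : ℝ) (hx : x ≠ 0) (hz : z ≠ 0) :
    let q := x / (Real.exp (-z) - 1)
    let φ := if q > 0 then 0 else Real.pi
    let θ := arccot (if q > 0 then -q else q)
    let t := z / Real.sin θ
    (-(Real.cot θ) * Real.cos φ * (Real.exp (-(t * Real.sin θ)) - 1),
     Real.cot θ * Real.sin φ * (Real.exp (t * Real.sin θ) - 1),
     t * Real.sin θ) = (x, 0, z) :=
  translation_curve_params_y_zero_general x z hz
end

section
/- Let A = (a₁,a₂,a₃) ∈ ℝ³ and let T_A⁻¹ denote the inverse Sol translation, mapping (x,y,z) to ((x-a₁)e^{a₃}, (y-a₂)e^{-a₃}, z-a₃). If the unit initial tangent vector of the translation curve from the origin to A is (u,v,w), then the unit initial tangent vector of the translation curve from the origin to T_A⁻¹(origin) = (-a₁e^{a₃}, -a₂e^{-a₃}, -a₃) is (-u,-v,-w). -/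
/-- The translation curve from the origin with initial tangent vector `p`. -/
noncomputable def solCurve (p : ℝ × ℝ × ℝ) (t : ℝ) : ℝ × ℝ × ℝ :=
  if p.2.2 = 0 then (p.1 * t, p.2.1 * t, 0)
  else (-(p.1 / p.2.2) * (Real.exp (-(p.2.2 * t)) - 1),
        (p.2.1 / p.2.2) * (Real.exp (p.2.2 * t) - 1), p.2.2 * t)

/-- `p` is the unit initial tangent vector of the translation curve from the
origin to `A`. -/
noncomputable def IsInitialTangent (p A : ℝ × ℝ × ℝ) : Prop :=
  p.1 ^ 2 + p.2.1 ^ 2 + p.2.2 ^ 2 = 1 ∧ ∃ t > (0:ℝ), solCurve p t = A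

/-- The inverse of the Sol translation carrying the origin to `A`. -/
noncomputable def solInvTrans (A q : ℝ × ℝ × ℝ) : ℝ × ℝ × ℝ :=
  ((q.1 - A.1) * Real.exp A.2.2, (q.2.1 - A.2.1) * Real.exp (-A.2.2),
    q.2.2 - A.2.2)

/-- The (Euclidean) angle between two tangent vectors at the origin. -/
noncomputable def ang (p q : ℝ × ℝ × ℝ) : ℝ :=
  Real.arccos (p.1 * q.1 + p.2.1 * q.2.1 + p.2.2 * q.2.2)

/-!
Reversing the initial tangent vector of a translation curve `γ` gives, at every time `t`, the
point `T_{γ(t)}⁻¹(0)`. When the third coordinate `c` of the tangent vector is nonzero this is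
the identity `(e^{-ct} - 1) e^{ct} = 1 - e^{ct}` in the first two coordinates.
-/

open Real

theorem solInvTrans_zero (A : ℝ × ℝ × ℝ) :
    solInvTrans A 0 = (-A.1 * exp A.2.2, -A.2.1 * exp (-A.2.2), -A.2.2) := by
  simp [solInvTrans]

theorem solCurve_neg (p : ℝ × ℝ × ℝ) (t : ℝ) :
    solCurve (-p) t = solInvTrans (solCurve p t) 0 := by
  obtain ⟨a, b, c⟩ := p
  by_cases hc : c = 0
  · subst hc
    simp [solCurve, solInvTrans, mul_comm]
  · have hexp : exp (-(c * t)) * exp (c * t) = 1 := by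
      rw [← exp_add, neg_add_cancel, exp_zero]
    simp only [solCurve, solInvTrans, Prod.neg_mk, Prod.fst_zero, Prod.snd_zero, neg_eq_zero, hc,
      if_false]
    refine Prod.ext ?_ (Prod.ext ?_ ?_) <;> simp only [neg_mul, neg_neg] <;> field_simp
    · linear_combination (-a) * hexp
    · linear_combination b * hexp
    · ring

theorem IsInitialTangent.neg {p A : ℝ × ℝ × ℝ} (h : IsInitialTangent p A) :
    IsInitialTangent (-p) (solInvTrans A 0) := by
  obtain ⟨hunit, t, ht, rfl⟩ := h
  refine ⟨?_, t, ht, solCurve_neg p t⟩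
  simpa only [Prod.fst_neg, Prod.snd_neg, neg_sq] using hunit

theorem tangent_antipodal (A : ℝ × ℝ × ℝ) (u v w : ℝ)
    (h : IsInitialTangent (u, v, w) A) :
    IsInitialTangent (-u, -v, -w)
      (-A.1 * Real.exp A.2.2, -A.2.1 * Real.exp (-A.2.2), -A.2.2) := by
  simpa only [Prod.neg_mk, solInvTrans_zero] using h.neg
end
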